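/- For every fixed-point free compact dynamical system (X, T) there exist N ∈ ℕ and δ > 0 such that for every prime p, coind_p P_p(𝒳(N, δ)) ≥ coind_p P_p(X) + 1, where 𝒳(N, δ) = {(x_n) ∈ ([0,1]^N)^ℤ : |x_n − x_{n+1}| ≥ δ ∀n} with the shift. -/

import Mathlib

open Function

/-- The standard model of `E_nℤ_p`, the join of `n+1` copies of the discrete space
`ℤ_p`: formal convex combinations `t₀g₀ ⊕ ⋯ ⊕ t_ng_n` of points of `ℤ_p`, realized
inside `ℝ^{Fin (n+1) × ZMod p}`. -/
def EnSpace (p n : ℕ) : Set (Fin (n+1) × ZMod p → ℝ) :=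
  {f | (∀ a, 0 ≤ f a) ∧ (∑ᶠ a, f a = 1) ∧
    ∀ (i : Fin (n+1)) (g h : ZMod p), 0 < f (i, g) → 0 < f (i, h) → g = h}

/-- The generator of the ℤ_p-action on (the ambient space of) `E_nℤ_p`. -/
def enShift (p n : ℕ) (f : Fin (n+1) × ZMod p → ℝ) : Fin (n+1) × ZMod p → ℝ :=
  fun a => f (a.1, a.2 + 1)

/-- The ℤ_p-coindex of a ℤ_p-space `(X, T)`: the supremum (in `WithBot ℕ∞`, with `⊥`
playing the role of `-1`, attained exactly for the empty space) of all `n` such that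
there is a ℤ_p-equivariant continuous map `E_nℤ_p → X`. -/
noncomputable def coind (p : ℕ) (X : Type*) [TopologicalSpace X] (T : X → X) :
    WithBot ℕ∞ :=
  sSup {k : WithBot ℕ∞ | ∃ (n : ℕ) (φ : EnSpace p n → X),
    k = ((n : ℕ∞) : WithBot ℕ∞) ∧ Continuous φ ∧
    ∀ e e' : EnSpace p n,
      (e' : Fin (n+1) × ZMod p → ℝ) = enShift p n (e : Fin (n+1) × ZMod p → ℝ) →
      φ e' = T (φ e)}

/-- The set of `p`-periodic points of `T`. -/
def perSet {X : Type*} (T : X → X) (p : ℕ) : Set X := {x | T^[p] x = x}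

/-- The restriction of `T` to its set of `p`-periodic points. -/
def perMap {X : Type*} (T : X → X) (p : ℕ) : perSet T p → perSet T p :=
  fun x => ⟨T x.1, by
    have h : T^[p] x.1 = x.1 := x.2
    show T^[p] (T x.1) = T x.1
    rw [← Function.iterate_succ_apply, Function.iterate_succ_apply', h]⟩

/-- The subshift `𝒳_m(N, δ) ⊂ ([0,1]^N)^ℤ` of sequences in the cube with
`|x_n − x_{n+m}| ≥ δ` for all `n`; for `m = 1` this is `𝒳(N, δ)`. -/
def XSet (N : ℕ) (δ : ℝ) (m : ℕ) : Set (ℤ → EuclideanSpace ℝ (Fin N)) :=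
  {x | (∀ (n : ℤ) (i : Fin N), x n i ∈ Set.Icc (0:ℝ) 1) ∧
    ∀ n : ℤ, δ ≤ ‖x n - x (n + (m : ℤ))‖}

/-- The shift map on `𝒳_m(N, δ)`. -/
def XShift (N : ℕ) (δ : ℝ) (m : ℕ) : XSet N δ m → XSet N δ m :=
  fun x => ⟨fun n => x.1 (n + 1), by
    refine ⟨fun n i => x.2.1 (n + 1) i, fun n => ?_⟩
    have h := x.2.2 (n + 1)
    show δ ≤ ‖x.1 (n + 1) - x.1 (n + (m : ℤ) + 1)‖
    rwa [show n + (m : ℤ) + 1 = n + 1 + (m : ℤ) by ring]⟩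

/-!
From a continuous equivariant map `φ : E_n ℤ_p → P_p(X)` we build one
`E_{n+1} ℤ_p = E_n ℤ_p * ℤ_p → P_p(𝒳(M+1, 1/4))`: the point `t e ⊕ (1 - t) a` of the join goes to
the `p`-periodic sequence with `k`-th term `(t F(T^k φ(e)), (1 - t) g(a - k))`. Here
`F : X → [0,1]^M` is a family of bumps such that for every `x` some bump is `1` at `x` and `0`
at `T x` (compactness and the absence of fixed points), and `g : ℤ_p → {0, 1/2, 1}` is a proper
3-colouring of the `p`-cycle, i.e. a `p`-periodic point of the subshift `Σ`. If `t ≥ 1/2`,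
consecutive terms differ by at least `1/2` in a bump coordinate; otherwise the `ℤ_p` part is a
single point of mass `> 1/2`, and they differ by at least `1/4` in the last coordinate. The factor
`t` keeps the map continuous where the `E_n` part degenerates.
-/

lemma continuous_mul_of_continuousOn_ne_zero {E : Type*} [TopologicalSpace E] {s u : E → ℝ}
    {C : ℝ} (hs : Continuous s) (hu : ContinuousOn u {e | s e ≠ 0}) (hC : ∀ e, |u e| ≤ C) :
    Continuous fun e => s e * u e := by
  refine continuous_iff_continuousAt.2 fun e₀ => ?_
  by_cases h : s e₀ = 0
  · have hs₀ : Filter.Tendsto s (nhds e₀) (nhds 0) := h ▸ hs.continuousAt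
    simpa [ContinuousAt, h] using
      hs₀.zero_mul_isBoundedUnder_le (Filter.isBoundedUnder_of ⟨C, fun e => hC e⟩)
  · exact hs.continuousAt.mul
      (hu.continuousAt ((isOpen_ne_fun hs continuous_const).mem_nhds h))

lemma Function.IsPeriodicPt.iterate_val_add_one {X : Type*} {T : X → X} {p : ℕ} [NeZero p]
    {x : X} (hx : IsPeriodicPt T p x) (a : ZMod p) :
    T^[(a + 1).val] x = T (T^[a.val] x) := by
  rw [ZMod.val_add, ZMod.val_one_eq_one_mod, Nat.add_mod_mod, hx.iterate_mod_apply,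
    iterate_succ_apply']

def AdmitsEquivariantMap (p n : ℕ) (Y : Type*) [TopologicalSpace Y] (S : Y → Y) : Prop :=
  ∃ φ : EnSpace p n → Y, Continuous φ ∧
    ∀ e e' : EnSpace p n, (e' : Fin (n+1) × ZMod p → ℝ) = enShift p n e → φ e' = S (φ e)

lemma coind_eq_sSup_image (p : ℕ) (Y : Type*) [TopologicalSpace Y] (S : Y → Y) :
    coind p Y S = sSup ((fun n : ℕ => ((n : ℕ∞) : WithBot ℕ∞)) ''
      {n | AdmitsEquivariantMap p n Y S}) := by
  unfold coind
  congr 1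
  ext k
  exact ⟨fun ⟨n, φ, hk, h⟩ => ⟨n, ⟨φ, h⟩, hk.symm⟩, fun ⟨n, ⟨φ, h⟩, hk⟩ => ⟨n, φ, hk.symm, h⟩⟩

lemma sSup_natCast_image_add_one_le {A B : Set ℕ} (h : ∀ n ∈ A, n + 1 ∈ B) :
    sSup ((fun n : ℕ => ((n : ℕ∞) : WithBot ℕ∞)) '' A) + 1
      ≤ sSup ((fun n : ℕ => ((n : ℕ∞) : WithBot ℕ∞)) '' B) := by
  rcases A.eq_empty_or_nonempty with rfl | ⟨a, ha⟩
  · simp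
  have coe_sSup : ∀ C : Set ℕ, C.Nonempty → sSup ((fun n : ℕ => ((n : ℕ∞) : WithBot ℕ∞)) '' C)
      = ((sSup (((↑) : ℕ → ℕ∞) '' C) : ℕ∞) : WithBot ℕ∞) := fun C hC => by
    rw [WithBot.coe_sSup' (hC.image _) (OrderTop.bddAbove _), Set.image_image]
  rw [coe_sSup A ⟨a, ha⟩, coe_sSup B ⟨a + 1, h a ha⟩, ← WithBot.coe_one, ← WithBot.coe_add,
    WithBot.coe_le_coe, ENat.sSup_add ⟨a, Set.mem_image_of_mem _ ha⟩]
  refine iSup₂_le ?_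
  rintro _ ⟨n, hn, rfl⟩
  exact le_sSup ⟨n + 1, h n hn, by push_cast; rfl⟩

lemma coind_add_one_le {p : ℕ} {Y Z : Type*} [TopologicalSpace Y] [TopologicalSpace Z]
    {S : Y → Y} {R : Z → Z}
    (h : ∀ n, AdmitsEquivariantMap p n Y S → AdmitsEquivariantMap p (n+1) Z R) :
    coind p Y S + 1 ≤ coind p Z R := by
  rw [coind_eq_sSup_image, coind_eq_sSup_image]
  exact sSup_natCast_image_add_one_le h

lemma single_mem_EnSpace (p n : ℕ) (b : Fin (n+1) × ZMod p) : Pi.single b 1 ∈ EnSpace p n := by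
  refine ⟨fun a => ?_, ?_, fun i g h hg hh => ?_⟩
  · exact (Pi.single_nonneg (α := fun _ => ℝ)).2 zero_le_one a
  · rw [finsum_eq_single _ b fun a ha => Pi.single_eq_of_ne ha 1, Pi.single_eq_same]
  · have key : ∀ c, 0 < (Pi.single b 1 : Fin (n+1) × ZMod p → ℝ) (i, c) → (i, c) = b := by
      intro c hc
      by_contra hne
      simp [Pi.single_eq_of_ne hne] at hc
    exact (Prod.ext_iff.1 ((key g hg).trans (key h hh).symm)).2

lemma EnSpace.exists_eq_zero_of_ne {p n : ℕ} {f : Fin (n+1) × ZMod p → ℝ} (hf : f ∈ EnSpace p n)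
    (i : Fin (n+1)) : ∃ a₀, ∀ b ≠ a₀, f (i, b) = 0 := by
  by_cases h : ∃ a₀, 0 < f (i, a₀)
  · obtain ⟨a₀, ha₀⟩ := h
    exact ⟨a₀, fun b hb => ((hf.1 _).lt_or_eq.resolve_left fun hpos =>
      hb (hf.2.2 i b a₀ hpos ha₀)).symm⟩
  · push Not at h
    exact ⟨0, fun b _ => le_antisymm (h b) (hf.1 _)⟩

section Head

variable {p n : ℕ} [NeZero p]

def headMass (f : Fin (n+2) × ZMod p → ℝ) : ℝ := ∑ i : Fin (n+1), ∑ a, f (i.castSucc, a)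

noncomputable def headNormalize (f : Fin (n+2) × ZMod p → ℝ) : Fin (n+1) × ZMod p → ℝ :=
  fun b => f (b.1.castSucc, b.2) / headMass f

lemma continuous_headMass : Continuous (headMass : (Fin (n+2) × ZMod p → ℝ) → ℝ) :=
  continuous_finsetSum _ fun _ _ => continuous_finsetSum _ fun _ _ => continuous_apply _

lemma headMass_add_sum_last {f : Fin (n+2) × ZMod p → ℝ} (hf : f ∈ EnSpace p (n+1)) :
    headMass f + ∑ a, f (Fin.last (n+1), a) = 1 := by
  have h := hf.2.1
  rwa [finsum_eq_sum_of_fintype, Fintype.sum_prod_type, Fin.sum_univ_castSucc] at h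

lemma headMass_nonneg {f : Fin (n+2) × ZMod p → ℝ} (hf : f ∈ EnSpace p (n+1)) :
    0 ≤ headMass f :=
  Finset.sum_nonneg fun _ _ => Finset.sum_nonneg fun _ _ => hf.1 _

lemma headMass_le_one {f : Fin (n+2) × ZMod p → ℝ} (hf : f ∈ EnSpace p (n+1)) :
    headMass f ≤ 1 := by
  linarith [headMass_add_sum_last hf, Finset.sum_nonneg fun a (_ : a ∈ Finset.univ) =>
    hf.1 (Fin.last (n+1), a)]

lemma headNormalize_mem {f : Fin (n+2) × ZMod p → ℝ} (hf : f ∈ EnSpace p (n+1))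
    (hs : headMass f ≠ 0) : headNormalize f ∈ EnSpace p n := by
  have hpos : 0 < headMass f := (headMass_nonneg hf).lt_of_ne' hs
  refine ⟨fun b => div_nonneg (hf.1 _) hpos.le, ?_, fun i a b ha hb => ?_⟩
  · rw [finsum_eq_sum_of_fintype]
    simp only [headNormalize]
    rw [← Finset.sum_div, Fintype.sum_prod_type]
    exact div_self hs
  · exact hf.2.2 i.castSucc a b ((div_pos_iff_of_pos_right hpos).1 ha)
      ((div_pos_iff_of_pos_right hpos).1 hb)

lemma headMass_enShift (f : Fin (n+2) × ZMod p → ℝ) :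
    headMass (enShift p (n+1) f) = headMass f :=
  Finset.sum_congr rfl fun i _ =>
    Equiv.sum_comp (Equiv.addRight 1) fun a => f (i.castSucc, a)

lemma headNormalize_enShift (f : Fin (n+2) × ZMod p → ℝ) :
    headNormalize (enShift p (n+1) f) = enShift p n (headNormalize f) := by
  funext b
  simp only [headNormalize, headMass_enShift, enShift]

end Head

lemma XShift_iterate_apply {N : ℕ} {δ : ℝ} {m : ℕ} (j : ℕ) (x : XSet N δ m) (k : ℤ) :
    ((XShift N δ m)^[j] x).1 k = x.1 (k + j) := by
  induction j generalizing x with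
  | zero => simp
  | succ j ih =>
    rw [iterate_succ_apply, ih]
    show x.1 (k + j + 1) = _
    push_cast
    ring_nf

lemma admitsEquivariantMap_perSet_XShift {p m N : ℕ} {δ : ℝ}
    (z : EnSpace p m → ZMod p → EuclideanSpace ℝ (Fin N)) (hz : ∀ a, Continuous fun e => z e a)
    (hz01 : ∀ e a i, z e a i ∈ Set.Icc (0 : ℝ) 1) (hgap : ∀ e a, δ ≤ ‖z e a - z e (a + 1)‖)
    (hshift : ∀ e e' : EnSpace p m, e'.1 = enShift p m e.1 → ∀ a, z e' a = z e (a + 1)) :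
    AdmitsEquivariantMap p m (perSet (XShift N δ 1) p) (perMap (XShift N δ 1) p) := by
  have hmem : ∀ e, (fun k : ℤ => z e k) ∈ XSet N δ 1 := fun e =>
    ⟨fun k => hz01 e k, fun k => by simpa using hgap e k⟩
  have hper : ∀ e, (⟨_, hmem e⟩ : XSet N δ 1) ∈ perSet (XShift N δ 1) p := fun e => by
    refine Subtype.ext (funext fun k => ?_)
    rw [XShift_iterate_apply]
    simp
  refine ⟨fun e => ⟨⟨_, hmem e⟩, hper e⟩,
    ((continuous_pi fun k : ℤ => hz k).subtype_mk _).subtype_mk _, fun e e' h => ?_⟩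
  refine Subtype.ext (Subtype.ext (funext fun k => ?_))
  show z e' k = z e ((k + 1 : ℤ) : ZMod p)
  rw [hshift e e' h, Int.cast_add, Int.cast_one]

def cycleColoring (p : ℕ) (a : ZMod p) : ℕ := if a.val + 1 = p then 2 else a.val % 2

lemma cycleColoring_le_two (p : ℕ) (a : ZMod p) : cycleColoring p a ≤ 2 := by
  unfold cycleColoring; split_ifs <;> omega

lemma cycleColoring_add_one_ne {p : ℕ} [Fact (1 < p)] (a : ZMod p) :
    cycleColoring p a ≠ cycleColoring p (a + 1) := by
  have ha : a.val < p := ZMod.val_lt a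
  have hval : (a + 1).val = (a.val + 1) % p := by rw [ZMod.val_add, ZMod.val_one]
  have hp : 1 < p := Fact.out
  unfold cycleColoring
  rw [hval]
  rcases Nat.lt_or_ge (a.val + 1) p with h | h
  · rw [Nat.mod_eq_of_lt h]
    split_ifs <;> omega
  · rw [show a.val + 1 = p by omega, Nat.mod_self]
    split_ifs <;> omega

lemma exists_zmod_oscillating {p : ℕ} (hp : 1 < p) :
    ∃ g : ZMod p → ℝ, (∀ a, g a ∈ Set.Icc (0 : ℝ) 1) ∧ ∀ a, 1/2 ≤ |g a - g (a + 1)| := by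
  have : Fact (1 < p) := ⟨hp⟩
  refine ⟨fun a => cycleColoring p a / 2, fun a => ⟨by positivity, ?_⟩, fun a => ?_⟩
  · have : (cycleColoring p a : ℝ) ≤ 2 := by exact_mod_cast cycleColoring_le_two p a
    linarith
  · have hne : (cycleColoring p a : ℤ) - cycleColoring p (a + 1) ≠ 0 :=
      sub_ne_zero.2 (by exact_mod_cast cycleColoring_add_one_ne a)
    have h1 : (1 : ℝ) ≤ |(cycleColoring p a : ℝ) - cycleColoring p (a + 1)| := by
      exact_mod_cast Int.one_le_abs hne
    rw [← sub_div, abs_div, abs_two]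
    linarith

lemma exists_separating_bumps {X : Type*} [MetricSpace X] [CompactSpace X] {T : X → X}
    (hT : Continuous T) (hfix : ∀ x, T x ≠ x) :
    ∃ (M : ℕ) (F : X → Fin M → ℝ), Continuous F ∧ (∀ x j, F x j ∈ Set.Icc (0 : ℝ) 1) ∧
      ∀ x, ∃ j, F x j = 1 ∧ F (T x) j = 0 := by
  rcases isEmpty_or_nonempty X with hX | hX
  · exact ⟨0, fun _ => 0, continuous_const, isEmptyElim, isEmptyElim⟩
  obtain ⟨x₀, -, hmin⟩ := isCompact_univ.exists_isMinOn Set.univ_nonempty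
    (continuous_id.dist hT).continuousOn
  obtain ⟨r, hr, hdist⟩ : ∃ r > 0, ∀ x, 3 * r ≤ dist x (T x) :=
    ⟨dist x₀ (T x₀) / 3, by have := dist_pos.2 (hfix x₀).symm; positivity, fun x => by
      have h : dist x₀ (T x₀) ≤ dist x (T x) := hmin (Set.mem_univ x)
      linarith⟩
  obtain ⟨t, ht⟩ := isCompact_univ.elim_finite_subcover (fun c : X => Metric.ball c r)
    (fun _ => Metric.isOpen_ball) fun x _ => Set.mem_iUnion.2 ⟨x, Metric.mem_ball_self hr⟩
  -- `bump d = 1` for `d ≤ r` and `bump d = 0` for `d ≥ 2 r`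
  let bump : ℝ → ℝ := fun d => max 0 (min 1 (2 - d / r))
  refine ⟨t.card, fun x j => bump (dist x (t.equivFin.symm j)),
    continuous_pi fun j => ?_, fun x j => ⟨le_max_left _ _, max_le zero_le_one (min_le_left _ _)⟩,
    fun x => ?_⟩
  · fun_prop
  obtain ⟨c, hct, hxc⟩ := Set.mem_iUnion₂.1 (ht (Set.mem_univ x))
  have hxc : dist x c < r := hxc
  refine ⟨t.equivFin ⟨c, hct⟩, ?_, ?_⟩
  · simp only [Equiv.symm_apply_apply, bump]
    rw [min_eq_left, max_eq_right zero_le_one]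
    rw [le_sub_comm, div_le_iff₀ hr]
    linarith
  · simp only [Equiv.symm_apply_apply, bump]
    have hTxc : 2 * r ≤ dist (T x) c := by
      linarith [hdist x, dist_triangle x c (T x), dist_comm c (T x)]
    refine max_eq_left (le_trans (min_le_right _ _) ?_)
    rw [sub_nonpos, le_div_iff₀ hr]
    linarith

section Join

variable {p n M : ℕ} [NeZero p] {X : Type*} {T : X → X}
  (F : X → Fin M → ℝ) (g : ZMod p → ℝ) (φ : EnSpace p n → perSet T p)

/- The value at `headMass e = 0` is irrelevant: `joinPoint` multiplies it by `0`. -/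
noncomputable def joinBase (e : EnSpace p (n+1)) : perSet T p :=
  if h : headMass e.1 ≠ 0 then φ ⟨_, headNormalize_mem e.2 h⟩
  else φ ⟨_, single_mem_EnSpace p n 0⟩

noncomputable def joinPoint (e : EnSpace p (n+1)) (a : ZMod p) : EuclideanSpace ℝ (Fin (M+1)) :=
  WithLp.toLp 2 (Fin.snoc (fun j => headMass e.1 * F (T^[a.val] (joinBase φ e)) j)
    (∑ b, e.1 (Fin.last (n+1), b) * g (b - a)))

variable {F g φ}

lemma joinPoint_castSucc (e : EnSpace p (n+1)) (a : ZMod p) (j : Fin M) :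
    joinPoint F g φ e a j.castSucc = headMass e.1 * F (T^[a.val] (joinBase φ e)) j := by
  simp [joinPoint]

lemma joinPoint_last (e : EnSpace p (n+1)) (a : ZMod p) :
    joinPoint F g φ e a (Fin.last M) = ∑ b, e.1 (Fin.last (n+1), b) * g (b - a) := by
  simp [joinPoint]

lemma continuousOn_joinBase [TopologicalSpace X] (hφ : Continuous φ) :
    ContinuousOn (joinBase φ) {e | headMass e.1 ≠ 0} := by
  rw [continuousOn_iff_continuous_domRestrict]
  have : Set.domRestrict {e | headMass e.1 ≠ 0} (joinBase φ)
      = fun e => φ ⟨_, headNormalize_mem e.1.2 e.2⟩ := by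
    funext e
    exact dif_pos e.2
  rw [this]
  refine hφ.comp (Continuous.subtype_mk (continuous_pi fun b => ?_) _)
  exact ((continuous_apply _).comp (continuous_subtype_val.comp continuous_subtype_val)).div
    (continuous_headMass.comp (continuous_subtype_val.comp continuous_subtype_val)) fun e => e.2

lemma continuous_joinPoint [TopologicalSpace X] (hT : Continuous T) (hF : Continuous F)
    (hF01 : ∀ x j, F x j ∈ Set.Icc (0 : ℝ) 1) (hφ : Continuous φ) (a : ZMod p) :
    Continuous fun e => joinPoint F g φ e a := by
  refine (PiLp.continuous_toLp 2 _).comp (continuous_pi fun j => ?_)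
  induction j using Fin.lastCases with
  | last =>
    simp only [Fin.snoc_last]
    exact continuous_finsetSum _ fun b _ =>
      ((continuous_apply _).comp continuous_subtype_val).mul continuous_const
  | cast j =>
    simp only [Fin.snoc_castSucc]
    refine continuous_mul_of_continuousOn_ne_zero
      (continuous_headMass.comp continuous_subtype_val) ?_ (C := 1) fun e => ?_
    · exact ((continuous_apply j).comp hF |>.comp (hT.iterate _) |>.comp
        continuous_subtype_val).comp_continuousOn (continuousOn_joinBase hφ)
    · exact (abs_of_nonneg (hF01 _ j).1).trans_le (hF01 _ j).2

lemma joinPoint_mem_Icc (hF01 : ∀ x j, F x j ∈ Set.Icc (0 : ℝ) 1)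
    (hg01 : ∀ a, g a ∈ Set.Icc (0 : ℝ) 1) (e : EnSpace p (n+1)) (a : ZMod p) (j : Fin (M+1)) :
    joinPoint F g φ e a j ∈ Set.Icc (0 : ℝ) 1 := by
  have hs := headMass_add_sum_last e.2
  have hs0 := headMass_nonneg e.2
  have hr0 : ∀ b, 0 ≤ e.1 (Fin.last (n+1), b) := fun b => e.2.1 _
  induction j using Fin.lastCases with
  | last =>
    rw [joinPoint_last]
    refine ⟨Finset.sum_nonneg fun b _ => mul_nonneg (hr0 b) (hg01 _).1, ?_⟩
    calc ∑ b, e.1 (Fin.last (n+1), b) * g (b - a) ≤ ∑ b, e.1 (Fin.last (n+1), b) :=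
          Finset.sum_le_sum fun b _ => mul_le_of_le_one_right (hr0 b) (hg01 _).2
      _ ≤ 1 := by linarith
  | cast j =>
    rw [joinPoint_castSucc]
    exact ⟨mul_nonneg hs0 (hF01 _ j).1,
      mul_le_one₀ (headMass_le_one e.2) (hF01 _ j).1 (hF01 _ j).2⟩

lemma quarter_le_norm_joinPoint_sub (hFsep : ∀ x, ∃ j, F x j = 1 ∧ F (T x) j = 0)
    (hgsep : ∀ a, 1/2 ≤ |g a - g (a + 1)|) (e : EnSpace p (n+1)) (a : ZMod p) :
    1/4 ≤ ‖joinPoint F g φ e a - joinPoint F g φ e (a + 1)‖ := by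
  have coord : ∀ j, |joinPoint F g φ e a j - joinPoint F g φ e (a + 1) j|
      ≤ ‖joinPoint F g φ e a - joinPoint F g φ e (a + 1)‖ := fun j => by
    simpa using PiLp.norm_apply_le (joinPoint F g φ e a - joinPoint F g φ e (a + 1)) j
  by_cases hs : 1/2 ≤ headMass e.1
  · obtain ⟨j, h1, h0⟩ := hFsep (T^[a.val] (joinBase φ e))
    refine le_trans ?_ (coord j.castSucc)
    rw [joinPoint_castSucc, joinPoint_castSucc,
      Function.IsPeriodicPt.iterate_val_add_one (joinBase φ e).2, h1, h0, mul_one, mul_zero,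
      sub_zero, abs_of_nonneg (headMass_nonneg e.2)]
    linarith
  · obtain ⟨a₀, ha₀⟩ := EnSpace.exists_eq_zero_of_ne e.2 (Fin.last (n+1))
    have hsum : ∀ c, ∑ b, e.1 (Fin.last (n+1), b) * g (b - c)
        = e.1 (Fin.last (n+1), a₀) * g (a₀ - c) := fun c =>
      Fintype.sum_eq_single a₀ fun b hb => by rw [ha₀ b hb, zero_mul]
    have hmass : 1/2 ≤ e.1 (Fin.last (n+1), a₀) := by
      have h := headMass_add_sum_last e.2
      rw [Fintype.sum_eq_single a₀ ha₀] at h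
      linarith
    have hgap := hgsep (a₀ - (a + 1))
    rw [show a₀ - (a + 1) + 1 = a₀ - a by ring, abs_sub_comm] at hgap
    refine le_trans ?_ (coord (Fin.last M))
    rw [joinPoint_last, joinPoint_last, hsum, hsum, ← mul_sub, abs_mul,
      abs_of_nonneg (e.2.1 _)]
    nlinarith

lemma joinBase_enShift
    (hφ : ∀ e e' : EnSpace p n, e'.1 = enShift p n e.1 → φ e' = perMap T p (φ e))
    {e e' : EnSpace p (n+1)} (h : e'.1 = enShift p (n+1) e.1) (hs : headMass e.1 ≠ 0) :
    joinBase φ e' = perMap T p (joinBase φ e) := by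
  have hs' : headMass e'.1 ≠ 0 := by rwa [h, headMass_enShift]
  rw [joinBase, joinBase, dif_pos hs, dif_pos hs']
  exact hφ _ _ (by simp only [h, headNormalize_enShift])

lemma joinPoint_enShift
    (hφ : ∀ e e' : EnSpace p n, e'.1 = enShift p n e.1 → φ e' = perMap T p (φ e))
    {e e' : EnSpace p (n+1)} (h : e'.1 = enShift p (n+1) e.1) (a : ZMod p) :
    joinPoint F g φ e' a = joinPoint F g φ e (a + 1) := by
  ext j
  induction j using Fin.lastCases with
  | last =>
    rw [joinPoint_last, joinPoint_last, h, ← Equiv.sum_comp (Equiv.addRight 1)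
      fun b => e.1 (Fin.last (n+1), b) * g (b - (a + 1))]
    simp only [enShift, Equiv.coe_addRight, add_sub_add_right_eq_sub]
  | cast j =>
    have hmass : headMass e'.1 = headMass e.1 := by rw [h, headMass_enShift]
    rw [joinPoint_castSucc, joinPoint_castSucc, hmass]
    rcases eq_or_ne (headMass e.1) 0 with h0 | h0
    · rw [h0, zero_mul, zero_mul]
    · rw [joinBase_enShift hφ h h0, Function.IsPeriodicPt.iterate_val_add_one (joinBase φ e).2,
        ← iterate_succ_apply' T, iterate_succ_apply]
      rfl

end Join

lemma AdmitsEquivariantMap.perSet_XShift_succ {p n M : ℕ} [NeZero p] {X : Type*}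
    [TopologicalSpace X] {T : X → X} {F : X → Fin M → ℝ} {g : ZMod p → ℝ} (hT : Continuous T)
    (hF : Continuous F) (hF01 : ∀ x j, F x j ∈ Set.Icc (0 : ℝ) 1)
    (hFsep : ∀ x, ∃ j, F x j = 1 ∧ F (T x) j = 0) (hg01 : ∀ a, g a ∈ Set.Icc (0 : ℝ) 1)
    (hgsep : ∀ a, 1/2 ≤ |g a - g (a + 1)|)
    (h : AdmitsEquivariantMap p n (perSet T p) (perMap T p)) :
    AdmitsEquivariantMap p (n+1) (perSet (XShift (M+1) (1/4) 1) p)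
      (perMap (XShift (M+1) (1/4) 1) p) := by
  obtain ⟨φ, hφ, hφeq⟩ := h
  exact admitsEquivariantMap_perSet_XShift (joinPoint F g φ)
    (continuous_joinPoint hT hF hF01 hφ) (joinPoint_mem_Icc hF01 hg01)
    (quarter_le_norm_joinPoint_sub hFsep hgsep) fun _ _ h => joinPoint_enShift hφeq h

theorem coind_XNdelta_ge (X : Type*) [TopologicalSpace X] [CompactSpace X]
    [TopologicalSpace.MetrizableSpace X] (T : X ≃ₜ X) (hT : ∀ x : X, T x ≠ x) :
    ∃ (N : ℕ) (δ : ℝ), 0 < δ ∧ ∀ p : ℕ, p.Prime →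
      coind p (perSet (⇑T) p) (perMap (⇑T) p) + 1
        ≤ coind p (perSet (XShift N δ 1) p) (perMap (XShift N δ 1) p) := by
  let := TopologicalSpace.metrizableSpaceMetric X
  obtain ⟨M, F, hF, hF01, hFsep⟩ := exists_separating_bumps T.continuous hT
  refine ⟨M + 1, 1/4, by norm_num, fun p hp => ?_⟩
  have : NeZero p := ⟨hp.ne_zero⟩
  obtain ⟨g, hg01, hgsep⟩ := exists_zmod_oscillating hp.one_lt
  exact coind_add_one_le fun n =>
    AdmitsEquivariantMap.perSet_XShift_succ T.continuous hF hF01 hFsep hg01 hgsep
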